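/- Let (α¹,α²,α³) be an R-Cartan structure on Σ satisfying the system R₃ = 0, R₁₁ = 1 - R - R₁², R₁₂ = R₂₁ = -R₁R₂, R₂₂ = 1 - R - R₂². Then for any constant C ≠ 0, the coframe ω¹ = (1/C) e^{-R}(α³ - R₂ α¹), ω² = (1/C) e^{-R} α¹, ω³ = α² satisfies the structure equations of an (I,0,K)-generalized Finsler structure with I = -2R₂ and K = C² e^{2R}. -/

import Mathlib

noncomputable section

/-- The model 3-manifold. -/
abbrev E3 := EuclideanSpace ℝ (Fin 3)

/-- Exterior derivative of a one-form on `E3`, evaluated on constant vectors. -/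
def dOne (ω : E3 → (E3 →L[ℝ] ℝ)) (x u v : E3) : ℝ :=
  fderiv ℝ (fun y => ω y v) x u - fderiv ℝ (fun y => ω y u) x v

/-- Wedge product of two one-forms, evaluated pointwise. -/
def wdg (η τ : E3 → (E3 →L[ℝ] ℝ)) (x u v : E3) : ℝ :=
  η x u * τ x v - η x v * τ x u

/-- Lie bracket of vector fields on `E3`. -/
def brkt (X Y : E3 → E3) (x : E3) : E3 :=
  fderiv ℝ Y x (X x) - fderiv ℝ X x (Y x)

/-- Leibniz rule for `dOne` of a scaled one-form. -/
lemma dOne_smul (g : E3 → ℝ) (ω : E3 → (E3 →L[ℝ] ℝ))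
    (hg : Differentiable ℝ g) (hω : ∀ v, Differentiable ℝ (fun y => ω y v))
    (x u v : E3) :
    dOne (fun y => g y • ω y) x u v =
      fderiv ℝ g x u * ω x v - fderiv ℝ g x v * ω x u + g x * dOne ω x u v := by
  simp only [dOne, ContinuousLinearMap.smul_apply, smul_eq_mul]
  rw [fderiv_fun_mul (hg x) (hω v x), fderiv_fun_mul (hg x) (hω u x)]
  simp only [ContinuousLinearMap.add_apply, ContinuousLinearMap.smul_apply, smul_eq_mul]
  ring

/-- `dOne` of a difference. -/
lemma dOne_sub (ω τ : E3 → (E3 →L[ℝ] ℝ))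
    (hω : ∀ v, Differentiable ℝ (fun y => ω y v))
    (hτ : ∀ v, Differentiable ℝ (fun y => τ y v)) (x u v : E3) :
    dOne (fun y => ω y - τ y) x u v = dOne ω x u v - dOne τ x u v := by
  simp only [dOne, ContinuousLinearMap.sub_apply]
  rw [fderiv_fun_sub (hω v x) (hτ v x), fderiv_fun_sub (hω u x) (hτ u x)]
  simp only [ContinuousLinearMap.sub_apply]
  ring

theorem stmt_13
    (α1 α2 α3 : E3 → (E3 →L[ℝ] ℝ)) (e1 e2 e3 : E3 → E3)
    (R R1 R2 : E3 → ℝ) (C : ℝ) (hC : C ≠ 0)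
    (hα1 : ContDiff ℝ (⊤ : ℕ∞) α1) (hα2 : ContDiff ℝ (⊤ : ℕ∞) α2) (hα3 : ContDiff ℝ (⊤ : ℕ∞) α3)
    (he1 : ContDiff ℝ (⊤ : ℕ∞) e1) (he2 : ContDiff ℝ (⊤ : ℕ∞) e2) (he3 : ContDiff ℝ (⊤ : ℕ∞) e3)
    (hR : ContDiff ℝ (⊤ : ℕ∞) R) (hR1 : ContDiff ℝ (⊤ : ℕ∞) R1) (hR2 : ContDiff ℝ (⊤ : ℕ∞) R2)
    (hdual : ∀ x, α1 x (e1 x) = 1 ∧ α1 x (e2 x) = 0 ∧ α1 x (e3 x) = 0 ∧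
      α2 x (e1 x) = 0 ∧ α2 x (e2 x) = 1 ∧ α2 x (e3 x) = 0 ∧
      α3 x (e1 x) = 0 ∧ α3 x (e2 x) = 0 ∧ α3 x (e3 x) = 1)
    (hs1 : ∀ x u v, dOne α1 x u v = wdg α2 α3 x u v)
    (hs2 : ∀ x u v, dOne α2 x u v = - wdg α1 α3 x u v)
    (hs3 : ∀ x u v, dOne α3 x u v = R x * wdg α1 α2 x u v)
    (hdR : ∀ x, (fderiv ℝ R x : E3 →L[ℝ] ℝ) = R1 x • α1 x + R2 x • α2 x)
    (hdR1 : ∀ x, (fderiv ℝ R1 x : E3 →L[ℝ] ℝ)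
      = (-((R1 x)^2 + R x - 1)) • α1 x + (-(R1 x * R2 x)) • α2 x
        + (-(R2 x)) • α3 x)
    (hdR2 : ∀ x, (fderiv ℝ R2 x : E3 →L[ℝ] ℝ)
      = (-(R1 x * R2 x)) • α1 x + (-((R2 x)^2 + R x - 1)) • α2 x
        + R1 x • α3 x) :
    (∀ x u v, dOne (fun y => (C⁻¹ * Real.exp (-R y)) • (α3 y - R2 y • α1 y)) x u v
        = -(-2 * R2 x)
            * wdg (fun y => (C⁻¹ * Real.exp (-R y)) • (α3 y - R2 y • α1 y)) α2 x u v
          + wdg (fun y => (C⁻¹ * Real.exp (-R y)) • α1 y) α2 x u v) ∧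
    (∀ x u v, dOne (fun y => (C⁻¹ * Real.exp (-R y)) • α1 y) x u v
        = - wdg (fun y => (C⁻¹ * Real.exp (-R y)) • (α3 y - R2 y • α1 y)) α2 x u v) ∧
    (∀ x u v, dOne α2 x u v
        = (C^2 * Real.exp (2 * R x))
            * wdg (fun y => (C⁻¹ * Real.exp (-R y)) • (α3 y - R2 y • α1 y))
                  (fun y => (C⁻¹ * Real.exp (-R y)) • α1 y) x u v) := by
  have hRd : Differentiable ℝ R := hR.differentiable (by simp)
  have hR2d : Differentiable ℝ R2 := hR2.differentiable (by simp)
  have ha : ∀ v, Differentiable ℝ (fun y => α1 y v) :=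
    fun v => (hα1.clm_apply contDiff_const).differentiable (by simp)
  have hb : ∀ v, Differentiable ℝ (fun y => α2 y v) :=
    fun v => (hα2.clm_apply contDiff_const).differentiable (by simp)
  have hc : ∀ v, Differentiable ℝ (fun y => α3 y v) :=
    fun v => (hα3.clm_apply contDiff_const).differentiable (by simp)
  set g : E3 → ℝ := fun y => C⁻¹ * Real.exp (-R y) with hgdef
  have hgd : Differentiable ℝ g := fun x =>
    ((((hRd x).hasFDerivAt).neg.exp).const_mul C⁻¹).differentiableAt
  have hgderiv : ∀ (x : E3) (w : E3),
      fderiv ℝ g x w = -(g x) * (R1 x * α1 x w + R2 x * α2 x w) := by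
    intro x w
    have h := (((hRd x).hasFDerivAt).neg.exp).const_mul C⁻¹
    rw [show fderiv ℝ g x = _ from h.fderiv]
    simp only [hdR x, ContinuousLinearMap.smul_apply, ContinuousLinearMap.neg_apply,
      ContinuousLinearMap.add_apply, smul_eq_mul, hgdef, Pi.neg_apply]
    ring
  -- differentiability of τ := α3 - R2 • α1 applied to v
  have hτ : ∀ v, Differentiable ℝ (fun y => (α3 y - R2 y • α1 y) v) := by
    intro v
    have : (fun y => (α3 y - R2 y • α1 y) v) = fun y => α3 y v - R2 y * α1 y v := by
      funext y
      simp [ContinuousLinearMap.sub_apply]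
    rw [this]
    exact (hc v).sub (hR2d.mul (ha v))
  have hR2deriv : ∀ (x w : E3),
      fderiv ℝ R2 x w = -(R1 x * R2 x) * α1 x w - ((R2 x)^2 + R x - 1) * α2 x w
        + R1 x * α3 x w := by
    intro x w
    simp only [hdR2 x, ContinuousLinearMap.add_apply, ContinuousLinearMap.smul_apply,
      smul_eq_mul]
    ring
  -- dOne of R2 • α1
  have hdR2α1 : ∀ x u v, dOne (fun y => R2 y • α1 y) x u v
      = fderiv ℝ R2 x u * α1 x v - fderiv ℝ R2 x v * α1 x u + R2 x * dOne α1 x u v :=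
    fun x u v => dOne_smul R2 α1 hR2d ha x u v
  -- dOne of τ
  have hdτ : ∀ x u v, dOne (fun y => α3 y - R2 y • α1 y) x u v
      = dOne α3 x u v - dOne (fun y => R2 y • α1 y) x u v := by
    intro x u v
    exact dOne_sub α3 (fun y => R2 y • α1 y) hc
      (fun v => by
        have : (fun y => (R2 y • α1 y) v) = fun y => R2 y * α1 y v := by
          funext y; simp
        rw [this]; exact hR2d.mul (ha v)) x u v
  refine ⟨?_, ?_, ?_⟩
  · intro x u v
    rw [dOne_smul g (fun y => α3 y - R2 y • α1 y) hgd hτ x u v,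
      hdτ x u v, hdR2α1 x u v, hs1, hs3]
    simp only [ContinuousLinearMap.sub_apply, ContinuousLinearMap.smul_apply, smul_eq_mul,
      hgderiv, hR2deriv, wdg]
    ring
  · intro x u v
    rw [dOne_smul g α1 hgd ha x u v, hs1]
    simp only [ContinuousLinearMap.sub_apply, ContinuousLinearMap.smul_apply, smul_eq_mul,
      hgderiv, wdg]
    ring
  · intro x u v
    rw [hs2]
    have hKg : C^2 * Real.exp (2 * R x) * (g x * g x) = 1 := by
      simp only [hgdef, Real.exp_neg]
      rw [show (2:ℝ) * R x = R x + R x by ring, Real.exp_add]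
      field_simp
    simp only [wdg, ContinuousLinearMap.sub_apply, ContinuousLinearMap.smul_apply,
      smul_eq_mul]
    simp only [hgdef] at hKg
    linear_combination (α3 x v * α1 x u - α3 x u * α1 x v) * hKg
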